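/- arXiv:2211.01758 — 3 statements merged into one kernel-verified Lean document; each statement's English description precedes it below -/
import Mathlib

section
/- Let f be a convex function on a closed convex set X ⊆ ℝ^d, and ν a continuously differentiable convex function. If u* = argmin_{u ∈ X} { f(u) + D^ν(u, y) }, where D^ν(x,y) = ν(x) - ν(y) - ⟨∇ν(y), x - y⟩ is the Bregman divergence of ν, then for all u ∈ X: f(u*) + D^ν(u*, y) + D^f(u, u*) ≤ f(u) + D^ν(u, y) - D^ν(u, u*). -/
open scoped RealInnerProductSpace

/-!
The subgradient is `g = ∇ν(y) - ∇ν(u*)`: first-order optimality of `u*` for the convex part `f`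
plus the differentiable part `D^ν(·, y)` says exactly that `g ∈ ∂f(u*)`. With this `g` the claimed
inequality is the three-point identity
`D^ν(u, y) - D^ν(u*, y) - D^ν(u, u*) = ⟨∇ν(u*) - ∇ν(y), u - u*⟩`, so it even holds with equality.
-/

open Set

section FirstOrderOptimality

variable {E : Type*} [NormedAddCommGroup E] [InnerProductSpace ℝ E] [CompleteSpace E]

theorem ConvexOn.sub_inner_le_of_isMinOn_add {X : Set E} {f h : E → ℝ} {h' x z : E}
    (hX : Convex ℝ X) (hf : ConvexOn ℝ X f) (hh : HasGradientAt h h' x)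
    (hmin : IsMinOn (f + h) X x) (hx : x ∈ X) (hz : z ∈ X) :
    f x - ⟪h', z - x⟫ ≤ f z := by
  -- Along `t ↦ x + t • (z - x)`, replacing `f` by its chord keeps `0` a minimizer on `[0, 1]`.
  set v := z - x
  let φ : ℝ → ℝ := fun t => t * (f z - f x) + h (x + t • v)
  have hsegment : ∀ t ∈ Icc (0 : ℝ) 1, x + t • v ∈ X ∧ f (x + t • v) ≤ f x + t * (f z - f x) := by
    intro t ⟨ht₀, ht₁⟩
    have hcomb : (1 - t) • x + t • z = x + t • v := by simp only [v]; module
    refine ⟨hcomb ▸ hX hx hz (by linarith) ht₀ (by ring), ?_⟩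
    have hconv := hf.2 hx hz (by linarith : (0 : ℝ) ≤ 1 - t) ht₀ (by ring)
    rw [hcomb, smul_eq_mul, smul_eq_mul] at hconv
    linarith
  have hφmin : IsMinOn φ (Icc 0 1) 0 := by
    intro t ht
    obtain ⟨hmem, hchord⟩ := hsegment t ht
    have hle : f x + h x ≤ f (x + t • v) + h (x + t • v) := hmin hmem
    show φ 0 ≤ φ t
    simp only [φ, zero_smul, add_zero, zero_mul, zero_add]
    linarith
  have hφderiv : HasDerivAt φ (f z - f x + ⟪h', v⟫) 0 := by
    have hline : HasDerivAt (fun t : ℝ => x + t • v) v 0 := by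
      simpa using ((hasDerivAt_id (0 : ℝ)).smul_const v).const_add x
    have hh' : HasFDerivAt h (InnerProductSpace.toDual ℝ E h') (x + (0 : ℝ) • v) := by
      simpa using hh.hasFDerivAt
    simpa using ((hasDerivAt_id (0 : ℝ)).mul_const (f z - f x)).fun_add
      (hh'.comp_hasDerivAt 0 hline)
  have hdir : (1 : ℝ) ∈ posTangentConeAt (Icc (0 : ℝ) 1) 0 :=
    mem_posTangentConeAt_of_segment_subset (by simp [segment_eq_Icc])
  have hslope := hφmin.localize.hasFDerivWithinAt_nonneg hφderiv.hasFDerivAt.hasFDerivWithinAt hdir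
  simp only [ContinuousLinearMap.toSpanSingleton_apply, one_smul] at hslope
  linarith

end FirstOrderOptimality

section Bregman

variable {E : Type*} [NormedAddCommGroup E] [InnerProductSpace ℝ E]

def bregmanDiv (φ : E → ℝ) (φ' : E → E) (x y : E) : ℝ :=
  φ x - φ y - ⟪φ' y, x - y⟫

theorem bregmanDiv_sub_sub_bregmanDiv (φ : E → ℝ) (φ' : E → E) (u v y : E) :
    bregmanDiv φ φ' u y - bregmanDiv φ φ' v y - bregmanDiv φ φ' u v = ⟪φ' v - φ' y, u - v⟫ := by
  have hsplit : u - y = (v - y) + (u - v) := by abel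
  simp only [bregmanDiv, hsplit, inner_add_right, inner_sub_left]
  ring

theorem hasGradientAt_bregmanDiv [CompleteSpace E] {φ : E → ℝ} {φ' : E → E} {x : E}
    (hφ : HasGradientAt φ (φ' x) x) (y : E) :
    HasGradientAt (fun u => bregmanDiv φ φ' u y) (φ' x - φ' y) x := by
  rw [hasGradientAt_iff_hasFDerivAt] at hφ ⊢
  have hinner : HasFDerivAt (fun u => ⟪φ' y, u - y⟫)
      (InnerProductSpace.toDual ℝ E (φ' y)) x := by
    simpa [inner_sub_right] using
      (InnerProductSpace.toDual ℝ E (φ' y)).hasFDerivAt.sub_const ⟪φ' y, y⟫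
  rw [map_sub]
  exact (hφ.sub_const (φ y)).fun_sub hinner

end Bregman

theorem stmt0_general {d : ℕ} (X : Set (EuclideanSpace ℝ (Fin d)))
    (hXconv : Convex ℝ X)
    (f ν : EuclideanSpace ℝ (Fin d) → ℝ)
    (ν' : EuclideanSpace ℝ (Fin d) → EuclideanSpace ℝ (Fin d))
    (hf : ConvexOn ℝ X f)
    (hν : ∀ x, HasGradientAt ν (ν' x) x)
    (y ustar : EuclideanSpace ℝ (Fin d))
    (hustar : ustar ∈ X)
    (hmin : ∀ u ∈ X,
      f ustar + (ν ustar - ν y - ⟪ν' y, ustar - y⟫)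
        ≤ f u + (ν u - ν y - ⟪ν' y, u - y⟫)) :
    ∃ g : EuclideanSpace ℝ (Fin d),
      (∀ z ∈ X, f ustar + ⟪g, z - ustar⟫ ≤ f z) ∧
      ∀ u ∈ X,
        f ustar + (ν ustar - ν y - ⟪ν' y, ustar - y⟫)
            + (f u - f ustar - ⟪g, u - ustar⟫)
          ≤ f u + (ν u - ν y - ⟪ν' y, u - y⟫)
            - (ν u - ν ustar - ⟪ν' ustar, u - ustar⟫) := by
  refine ⟨ν' y - ν' ustar, fun z hz => ?_, fun u _ => ?_⟩
  · have hsub := hf.sub_inner_le_of_isMinOn_add hXconv (hasGradientAt_bregmanDiv (hν ustar) y)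
      (fun u hu => hmin u hu) hustar hz
    rwa [← neg_sub (ν' y), inner_neg_left, sub_neg_eq_add] at hsub
  · have hthree := bregmanDiv_sub_sub_bregmanDiv ν ν' u ustar y
    have hg : ⟪ν' y - ν' ustar, u - ustar⟫ = -⟪ν' ustar - ν' y, u - ustar⟫ := by
      rw [← inner_neg_left, neg_sub]
    simp only [bregmanDiv] at hthree
    linarith

/-- Proximal lemma (Lemma 2.4): if `ustar` minimizes `f + D^ν(·, y)` over a closed
convex set `X`, then there is a subgradient `g` of `f` at `ustar` such that for all `u ∈ X`,
`f(ustar) + D^ν(ustar, y) + D^f(u, ustar) ≤ f(u) + D^ν(u, y) - D^ν(u, ustar)`. -/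
theorem stmt0 {d : ℕ} (X : Set (EuclideanSpace ℝ (Fin d)))
    (hXc : IsClosed X) (hXconv : Convex ℝ X)
    (f ν : EuclideanSpace ℝ (Fin d) → ℝ)
    (ν' : EuclideanSpace ℝ (Fin d) → EuclideanSpace ℝ (Fin d))
    (hf : ConvexOn ℝ X f)
    (hν : ∀ x, HasGradientAt ν (ν' x) x)
    (hν'cont : Continuous ν')
    (hνconv : ConvexOn ℝ Set.univ ν)
    (y ustar : EuclideanSpace ℝ (Fin d))
    (hy : y ∈ X) (hustar : ustar ∈ X)
    (hmin : ∀ u ∈ X,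
      f ustar + (ν ustar - ν y - ⟪ν' y, ustar - y⟫)
        ≤ f u + (ν u - ν y - ⟪ν' y, u - y⟫)) :
    ∃ g : EuclideanSpace ℝ (Fin d),
      (∀ z ∈ X, f ustar + ⟪g, z - ustar⟫ ≤ f z) ∧
      ∀ u ∈ X,
        f ustar + (ν ustar - ν y - ⟪ν' y, ustar - y⟫)
            + (f u - f ustar - ⟪g, u - ustar⟫)
          ≤ f u + (ν u - ν y - ⟪ν' y, u - y⟫)
            - (ν u - ν ustar - ⟪ν' ustar, u - ustar⟫) :=
  stmt0_general X hXconv f ν ν' hf hν y ustar hustar hmin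
end

section
/- Let 1 < κ ≤ 2 ≤ q and L ≥ 0. Set r = (q - κ)/κ and M = (r/q)^r · L. If f is differentiable on a convex set X ⊆ ℝ^d and satisfies f(x) - f(y) - ⟨∇f(y), x - y⟩ ≤ (L/κ)‖x - y‖^κ for all x, y ∈ X (i.e., f is (L, κ)-weakly smooth), then for every δ > 0 and all x, y ∈ X: f(x) - f(y) - ⟨∇f(y), x - y⟩ ≤ (M/(q δ^r))‖x - y‖^q + L δ. -/
/-! Weak smoothness bounds the Taylor remainder by `(L/κ) t^κ` with `t = ‖x - y‖`, and Young's
inequality with exponents `q/κ` and `q/(q - κ)`, balanced so that the constant term is exactly `δ`,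
gives `t^κ/κ ≤ (r/q)^r/(q δ^r) t^q + δ`. -/

namespace Real

/-- Weighted AM-GM for `a^κ = (s^((q-κ)/κ) a^q)^(κ/q) · (s⁻¹)^((q-κ)/q)`. -/
theorem rpow_le_mul_rpow_add_mul_inv {κ q a s : ℝ} (hκ : 0 < κ) (hκq : κ ≤ q) (ha : 0 ≤ a)
    (hs : 0 < s) :
    a ^ κ ≤ κ / q * (s ^ ((q - κ) / κ) * a ^ q) + (q - κ) / q * s⁻¹ := by
  have hq : 0 < q := hκ.trans_le hκq
  have hamgm := geom_mean_le_arith_mean2_weighted (w₁ := κ / q) (w₂ := (q - κ) / q)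
    (p₁ := s ^ ((q - κ) / κ) * a ^ q) (p₂ := s⁻¹) (by positivity)
    (div_nonneg (by linarith) hq.le) (by positivity) (by positivity) (by field_simp; ring)
  have hscale : (s ^ ((q - κ) / κ)) ^ (κ / q) = s ^ ((q - κ) / q) := by
    rw [← rpow_mul hs.le]
    congr 1
    field_simp
  have hpow : (a ^ q) ^ (κ / q) = a ^ κ := by
    rw [← rpow_mul ha]
    congr 1
    field_simp
  have hprod : (s ^ ((q - κ) / κ) * a ^ q) ^ (κ / q) * s⁻¹ ^ ((q - κ) / q) = a ^ κ := by
    rw [mul_rpow (by positivity) (by positivity), hscale, hpow, inv_rpow hs.le]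
    field_simp [(rpow_pos_of_pos hs ((q - κ) / q)).ne']
  rwa [hprod] at hamgm

theorem rpow_div_le_mul_rpow_add {κ q r t δ : ℝ} (hκ : 0 < κ) (hκq : κ ≤ q)
    (hr : r = (q - κ) / κ) (ht : 0 ≤ t) (hδ : 0 < δ) :
    t ^ κ / κ ≤ (r / q) ^ r / (q * δ ^ r) * t ^ q + δ := by
  have hq : 0 < q := hκ.trans_le hκq
  rcases (div_nonneg (sub_nonneg.2 hκq) hκ.le).eq_or_lt with hr0 | hr0
  · have hqκ : q = κ := by
      have := (div_eq_zero_iff.mp hr0.symm).resolve_right hκ.ne'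
      linarith
    rw [hr, ← hr0, rpow_zero, rpow_zero, hqκ, mul_one, one_div_mul_eq_div]
    linarith
  · rw [← hr] at hr0
    have hyoung := rpow_le_mul_rpow_add_mul_inv hκ hκq ht (div_pos hr0 (mul_pos hq hδ))
    rw [← hr, div_rpow (by positivity) (by positivity)] at hyoung
    have hκq' : 0 < q - κ := (div_pos_iff_of_pos_right hκ).1 (hr ▸ hr0)
    have hconst : (q - κ) / q * (r / (q * δ))⁻¹ = κ * δ := by
      rw [hr]
      field_simp
    rw [hconst, mul_rpow hq.le hδ.le] at hyoung
    calc t ^ κ / κ ≤ (κ / q * (r ^ r / (q ^ r * δ ^ r) * t ^ q) + κ * δ) / κ := by gcongr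
      _ = (r / q) ^ r / (q * δ ^ r) * t ^ q + δ := by
        rw [div_rpow hr0.le hq.le]
        field_simp

end Real

theorem stmt2_general {E : Type*} [NormedAddCommGroup E] [NormedSpace ℝ E]
    (X : Set E)
    (f : E → ℝ) (f' : E → E →L[ℝ] ℝ)
    (κ q L r M : ℝ)
    (hκ1 : 1 < κ) (hκ2 : κ ≤ 2) (hq : 2 ≤ q) (hL : 0 ≤ L)
    (hr : r = (q - κ) / κ) (hM : M = (r / q) ^ r * L)
    (hsmooth : ∀ x ∈ X, ∀ y ∈ X,
      f x - f y - f' y (x - y) ≤ L / κ * ‖x - y‖ ^ κ)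
    (δ : ℝ) (hδ : 0 < δ) (x y : E) (hx : x ∈ X) (hy : y ∈ X) :
    f x - f y - f' y (x - y) ≤ M / (q * δ ^ r) * ‖x - y‖ ^ q + L * δ := by
  have hyoung :=
    Real.rpow_div_le_mul_rpow_add (by linarith) (by linarith) hr (norm_nonneg (x - y)) hδ
  calc f x - f y - f' y (x - y) ≤ L / κ * ‖x - y‖ ^ κ := hsmooth x hx y hy
    _ = L * (‖x - y‖ ^ κ / κ) := by ring
    _ ≤ L * ((r / q) ^ r / (q * δ ^ r) * ‖x - y‖ ^ q + δ) := mul_le_mul_of_nonneg_left hyoung hL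
    _ = M / (q * δ ^ r) * ‖x - y‖ ^ q + L * δ := by rw [hM]; ring

/-- Lemma on inexact gradients: if `f` is `(L, κ)`-weakly smooth on a convex set `X`
(w.r.t. an arbitrary norm), then with `r = (q-κ)/κ` and `M = (r/q)^r L`, for every `δ > 0`,
`f(x) - f(y) - ⟨∇f(y), x-y⟩ ≤ (M/(q δ^r)) ‖x-y‖^q + L δ`. -/
theorem stmt2 {E : Type*} [NormedAddCommGroup E] [NormedSpace ℝ E]
    (X : Set E) (hX : Convex ℝ X)
    (f : E → ℝ) (f' : E → E →L[ℝ] ℝ)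
    (κ q L r M : ℝ)
    (hκ1 : 1 < κ) (hκ2 : κ ≤ 2) (hq : 2 ≤ q) (hL : 0 ≤ L)
    (hr : r = (q - κ) / κ) (hM : M = (r / q) ^ r * L)
    (hdiff : ∀ x ∈ X, HasFDerivAt f (f' x) x)
    (hsmooth : ∀ x ∈ X, ∀ y ∈ X,
      f x - f y - f' y (x - y) ≤ L / κ * ‖x - y‖ ^ κ)
    (δ : ℝ) (hδ : 0 < δ) (x y : E) (hx : x ∈ X) (hy : y ∈ X) :
    f x - f y - f' y (x - y) ≤ M / (q * δ ^ r) * ‖x - y‖ ^ q + L * δ :=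
  stmt2_general X f f' κ q L r M hκ1 hκ2 hq hL hr hM hsmooth δ hδ x y hx hy
end

section
/- Convexity combination step in the accelerated method: if F is (L,κ)-weakly smooth and H convex, and x_{t}^{md} = (A_{t-1}/A_t) x_t^{ag} + (α_t/A_t) x_t, x_{t+1}^{ag} = (A_{t-1}/A_t) x_t^{ag} + (α_t/A_t) x_{t+1} with A_t = A_{t-1} + α_t, then for every δ_t > 0: Ψ(x_{t+1}^{ag}) ≤ (A_{t-1}/A_t) Ψ(x_t^{ag}) + (α_t/A_t) l_Ψ(x_{t+1}, x_t^{md}) + (M/(qδ_t^r))(α_t/A_t)^q ‖x_{t+1} − x_t‖^q + L δ_t, where l_Ψ(x, y) = F(y) + ⟨∇F(y), x − y⟩ + H(x), Ψ = F + H, r = (q−κ)/κ, M = (r/q)^r L. -/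
/-!
With `σ = A_{t-1}/A_t` and `τ = α_t/A_t`, the step `x_{t+1}^{ag} - x_t^{md} = τ (x_{t+1} - x_t)`
also splits as `σ (x_t^{ag} - x_t^{md}) + τ (x_{t+1} - x_t^{md})`. Weak smoothness at `x_t^{md}`
followed by the first-order convexity inequality at `x_t^{ag}` bounds `F(x_{t+1}^{ag})` by
`σ F(x_t^{ag}) + τ (F(x^{md}) + ⟨∇F(x^{md}), x_{t+1} - x^{md}⟩)` plus `(L/κ) (τ ‖x_{t+1} - x_t‖)^κ`,
and convexity of `H` handles `H`. Young's inequality with exponents `q/κ` and `q/(q-κ)` trades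
the error term for `(M/(qδ^r)) (τ ‖x_{t+1} - x_t‖)^q + Lδ`.
-/

open Set

theorem ConvexOn.add_fderiv_sub_le {E : Type*} [NormedAddCommGroup E] [NormedSpace ℝ E]
    {X : Set E} {F : E → ℝ} {F' : E →L[ℝ] ℝ} (hF : ConvexOn ℝ X F)
    {x y : E} (hx : x ∈ X) (hy : y ∈ X) (hd : HasFDerivAt F F' x) :
    F x + F' (y - x) ≤ F y := by
  set g : ℝ → ℝ := F ∘ AffineMap.lineMap x y
  have hg : ConvexOn ℝ (Icc 0 1) g :=
    (hF.comp_affineMap _).subset (hF.1.mapsTo_lineMap hx hy) (convex_Icc 0 1)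
  have hline : HasDerivAt (AffineMap.lineMap x y : ℝ → E) (y - x) 0 := by
    rw [show ⇑(AffineMap.lineMap x y) = fun t : ℝ => t • (y - x) + x from
      funext fun t => AffineMap.lineMap_apply_module' x y t]
    simpa using ((hasDerivAt_id (0 : ℝ)).smul_const (y - x)).add_const x
  have hd0 : HasFDerivAt F F' (AffineMap.lineMap x y (0 : ℝ)) := by simpa using hd
  have hg' : HasDerivAt g (F' (y - x)) 0 := hd0.comp_hasDerivAt 0 hline
  have hslope := hg.le_slope_of_hasDerivAt (by simp) (by simp) zero_lt_one hg'
  simp only [g, slope_def_field, Function.comp_apply, AffineMap.lineMap_apply_zero,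
    AffineMap.lineMap_apply_one, sub_zero, div_one] at hslope
  linarith

-- Weighted AM-GM for `c^r a^q` and `c⁻¹` with weights `κ/q`, `(q-κ)/q`, where `c = r/(qδ)`.
theorem rpow_div_le_mul_rpow_add {κ q r δ a : ℝ} (hκ : 0 < κ) (hκq : κ ≤ q)
    (hr : r = (q - κ) / κ) (hδ : 0 < δ) (ha : 0 ≤ a) :
    a ^ κ / κ ≤ (r / q) ^ r / (q * δ ^ r) * a ^ q + δ := by
  obtain rfl | hκq' := hκq.eq_or_lt
  · simp [hr, div_eq_inv_mul, hδ.le]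
  have hq : 0 < q := hκ.trans hκq'
  have hrκ : r * κ = q - κ := by rw [hr]; field_simp
  have hr0 : 0 < r := hr ▸ div_pos (sub_pos.2 hκq') hκ
  set c := r / (q * δ)
  have hc : 0 < c := by positivity
  have key : (c ^ r * a ^ q) ^ (κ / q) * c⁻¹ ^ ((q - κ) / q) = a ^ κ := by
    rw [Real.mul_rpow (by positivity) (by positivity), ← Real.rpow_mul hc.le,
      ← Real.rpow_mul ha, Real.inv_rpow hc.le, mul_div_cancel₀ _ hq.ne',
      show r * (κ / q) = (q - κ) / q by rw [← hrκ]; ring]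
    field_simp
  have amgm := Real.geom_mean_le_arith_mean2_weighted (div_pos hκ hq).le
    (div_pos (sub_pos.2 hκq') hq).le (by positivity : 0 ≤ c ^ r * a ^ q) (inv_pos.2 hc).le
    (by field_simp; ring)
  rw [key] at amgm
  calc a ^ κ / κ ≤ (κ / q * (c ^ r * a ^ q) + (q - κ) / q * c⁻¹) / κ := by gcongr
    _ = _ := by
      have hcr : c ^ r = (r / q) ^ r / δ ^ r := by
        rw [← Real.div_rpow (by positivity) hδ.le, div_div]
      rw [hcr, inv_div]
      field_simp
      rw [← hrκ]; ring

theorem ConvexOn.add_fderiv_smul_add_smul_le {E : Type*} [NormedAddCommGroup E]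
    [NormedSpace ℝ E] {X : Set E} {F : E → ℝ} {F' : E →L[ℝ] ℝ} (hF : ConvexOn ℝ X F)
    {m a : E} (hm : m ∈ X) (ha : a ∈ X) (hd : HasFDerivAt F F' m) {σ τ : ℝ} (hσ : 0 ≤ σ)
    (hστ : σ + τ = 1) (b : E) :
    F m + F' (σ • (a - m) + τ • (b - m)) ≤ σ * F a + τ * (F m + F' (b - m)) := by
  have hfirst := mul_le_mul_of_nonneg_left (hF.add_fderiv_sub_le hm ha hd) hσ
  rw [map_add, map_smul, map_smul, smul_eq_mul, smul_eq_mul]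
  linear_combination hfirst - F m * hστ

theorem stmt13_general {E : Type*} [NormedAddCommGroup E] [NormedSpace ℝ E]
    (X : Set E)
    (F H : E → ℝ) (F' : E → E →L[ℝ] ℝ)
    (κ q L r M : ℝ)
    (hκ1 : 1 < κ) (hκ2 : κ ≤ 2) (hq : 2 ≤ q) (hL : 0 ≤ L)
    (hr : r = (q - κ) / κ) (hM : M = (r / q) ^ r * L)
    (hFconv : ConvexOn ℝ X F) (hHconv : ConvexOn ℝ X H)
    (hFdiff : ∀ x ∈ X, HasFDerivAt F (F' x) x)
    (hFsmooth : ∀ x ∈ X, ∀ y ∈ X,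
      F x - F y - F' y (x - y) ≤ L / κ * ‖x - y‖ ^ κ)
    (αt Aprev At : ℝ) (hαt : 0 < αt) (hAprev : 0 ≤ Aprev) (hAt : At = Aprev + αt)
    (xag xt xt1 xmd xag1 : E)
    (hxag : xag ∈ X) (hxt : xt ∈ X) (hxt1 : xt1 ∈ X)
    (hxmd : xmd = (Aprev / At) • xag + (αt / At) • xt)
    (hxag1 : xag1 = (Aprev / At) • xag + (αt / At) • xt1)
    (δt : ℝ) (hδt : 0 < δt) :
    F xag1 + H xag1
      ≤ (Aprev / At) * (F xag + H xag)
        + (αt / At) * (F xmd + F' xmd (xt1 - xmd) + H xt1)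
        + M / (q * δt ^ r) * (αt / At) ^ q * ‖xt1 - xt‖ ^ q
        + L * δt := by
  have hAt0 : 0 < At := by linarith
  set σ := Aprev / At
  set τ := αt / At
  have hσ : 0 ≤ σ := by positivity
  have hτ : 0 ≤ τ := by positivity
  have hστ : σ + τ = 1 := by rw [← add_div, ← hAt, div_self hAt0.ne']
  have hxmdX : xmd ∈ X := hxmd ▸ hFconv.1 hxag hxt hσ hτ hστ
  have hxag1X : xag1 ∈ X := hxag1 ▸ hFconv.1 hxag hxt1 hσ hτ hστ
  have hsplit : xag1 - xmd = σ • (xag - xmd) + τ • (xt1 - xmd) := by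
    rw [hxag1]; linear_combination (norm := module) hστ • xmd
  have hnorm : ‖xag1 - xmd‖ = τ * ‖xt1 - xt‖ := by
    rw [show xag1 - xmd = τ • (xt1 - xt) by rw [hxag1, hxmd]; module, norm_smul,
      Real.norm_of_nonneg hτ]
  have hyoung : L / κ * ‖xag1 - xmd‖ ^ κ
      ≤ M / (q * δt ^ r) * τ ^ q * ‖xt1 - xt‖ ^ q + L * δt := by
    have hτa : 0 ≤ τ * ‖xt1 - xt‖ := by positivity
    calc L / κ * ‖xag1 - xmd‖ ^ κ = L * ((τ * ‖xt1 - xt‖) ^ κ / κ) := by rw [hnorm]; ring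
      _ ≤ L * ((r / q) ^ r / (q * δt ^ r) * (τ * ‖xt1 - xt‖) ^ q + δt) := by
        gcongr; exact rpow_div_le_mul_rpow_add (by linarith) (by linarith) hr hδt hτa
      _ = _ := by rw [hM, Real.mul_rpow hτ (norm_nonneg _)]; ring
  have hsmooth := hFsmooth xag1 hxag1X xmd hxmdX
  have hlin := hFconv.add_fderiv_smul_add_smul_le hxmdX hxag (hFdiff xmd hxmdX) hσ hστ xt1
  rw [← hsplit] at hlin
  have hH : H xag1 ≤ σ * H xag + τ * H xt1 := hxag1 ▸ hHconv.2 hxag hxt1 hσ hτ hστ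
  linarith

/-- Convexity combination step in the accelerated method: with
`x_t^{md} = (A_{t-1}/A_t)x_t^{ag} + (α_t/A_t)x_t` and
`x_{t+1}^{ag} = (A_{t-1}/A_t)x_t^{ag} + (α_t/A_t)x_{t+1}`, `A_t = A_{t-1} + α_t`, for every
`δ_t > 0`: `Ψ(x_{t+1}^{ag}) ≤ (A_{t-1}/A_t)Ψ(x_t^{ag}) + (α_t/A_t)l_Ψ(x_{t+1}, x_t^{md})
+ (M/(qδ_t^r))(α_t/A_t)^q ‖x_{t+1} - x_t‖^q + Lδ_t`. -/
theorem stmt13 {E : Type*} [NormedAddCommGroup E] [NormedSpace ℝ E]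
    (X : Set E) (hXconv : Convex ℝ X)
    (F H : E → ℝ) (F' : E → E →L[ℝ] ℝ)
    (κ q L r M : ℝ)
    (hκ1 : 1 < κ) (hκ2 : κ ≤ 2) (hq : 2 ≤ q) (hL : 0 ≤ L)
    (hr : r = (q - κ) / κ) (hM : M = (r / q) ^ r * L)
    (hFconv : ConvexOn ℝ X F) (hHconv : ConvexOn ℝ X H)
    (hFdiff : ∀ x ∈ X, HasFDerivAt F (F' x) x)
    (hFsmooth : ∀ x ∈ X, ∀ y ∈ X,
      F x - F y - F' y (x - y) ≤ L / κ * ‖x - y‖ ^ κ)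
    (αt Aprev At : ℝ) (hαt : 0 < αt) (hAprev : 0 ≤ Aprev) (hAt : At = Aprev + αt)
    (xag xt xt1 xmd xag1 : E)
    (hxag : xag ∈ X) (hxt : xt ∈ X) (hxt1 : xt1 ∈ X)
    (hxmd : xmd = (Aprev / At) • xag + (αt / At) • xt)
    (hxag1 : xag1 = (Aprev / At) • xag + (αt / At) • xt1)
    (δt : ℝ) (hδt : 0 < δt) :
    F xag1 + H xag1
      ≤ (Aprev / At) * (F xag + H xag)
        + (αt / At) * (F xmd + F' xmd (xt1 - xmd) + H xt1)
        + M / (q * δt ^ r) * (αt / At) ^ q * ‖xt1 - xt‖ ^ q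
        + L * δt :=
  stmt13_general X F H F' κ q L r M hκ1 hκ2 hq hL hr hM hFconv hHconv hFdiff hFsmooth αt Aprev At
    hαt hAprev hAt xag xt xt1 xmd xag1 hxag hxt hxt1 hxmd hxag1 δt hδt
end
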